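/- arXiv:math/9208204 — 2 statements merged into one kernel-verified Lean document; each statement's English description precedes it below -/
import Mathlib

section
/- In a finite tree, the successor relation on the set of pseudoaccesses is a cyclic permutation, i.e., the successor function acts transitively on the set of all pseudoaccesses (equivalently, the set of pseudoaccesses forms a single cycle under the successor map). -/
/-- A pseudoaccess at a vertex `v` is determined by its first edge, i.e. by a dart
`(v, w)`.  Given a cyclic order on the edges at each vertex, encoded by a permutation
`σ v` of the neighbors of `v` (sending each incident edge to its successor), the
successor of the pseudoaccess `(v, ℓ, ℓ')` (with `ℓ = {v,w}`, `ℓ' = {v, σ v w}`) is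
the pseudoaccess at `v' = σ v w` whose first edge is `ℓ'`, i.e. the dart `(σ v w, v)`. -/
def pseudoaccessSucc {V : Type*} (G : SimpleGraph V)
    (σ : ∀ v : V, Equiv.Perm (G.neighborSet v)) (d : G.Dart) : G.Dart :=
  ⟨((((σ d.fst) ⟨d.snd, d.adj⟩ : G.neighborSet d.fst) : V), d.fst),
    (((σ d.fst) ⟨d.snd, d.adj⟩).2).symm⟩

/-! Pseudoaccesses are darts, and the successor is the permutation `(v, w) ↦ (σ v w, v)` of
the darts. Every dart `(v, w)` lies on the cycle of its reverse `(w, v)`: by induction on the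
number of vertices closer to `v` than to `w`, each dart `(v, u)` with `u ≠ w` reaches its
reverse `(u, v)`, whose successor is `(v, σ v u)`; so from `(v, w)` one visits
`(v, σ v w), (v, (σ v)² w), …` up to `(v, (σ v)⁻¹ w)`, whose successor is `(w, v)`.
Since each `σ v` is transitive, this puts all darts at a vertex on one cycle, and walking
along the (connected) tree puts all darts on one cycle. -/

open Equiv

namespace SimpleGraph

variable {V : Type*} {G : SimpleGraph V}

lemma IsTree.eq_of_adj_of_dist_lt (hG : G.IsTree) {x u v w : V} (hu : G.Adj v u) (hw : G.Adj v w)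
    (hxu : G.dist x u < G.dist x v) (hxw : G.dist x w < G.dist x v) : u = w := by
  classical
  obtain ⟨p, hp, -⟩ := hG.connected.exists_path_of_dist x v
  have eq_penultimate : ∀ {y}, G.Adj v y → G.dist x y < G.dist x v → y = p.penultimate := by
    intro y hy hxy
    obtain ⟨q, hq, hql⟩ := hG.connected.exists_path_of_dist x y
    have hvq : v ∉ q.support := fun hv => by
      have := (dist_le (q.takeUntil v hv)).trans (q.length_takeUntil_le_length hv)
      omega
    exact hG.isAcyclic.eq_penultimate_of_adj_end hp hy
      (hG.isAcyclic.mem_support_of_ne_mem_support_of_adj_of_isPath hp hq hy hvq)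
  exact (eq_penultimate hu hxu).trans (eq_penultimate hw hxw).symm

lemma IsTree.setOf_dist_lt_ssubset (hG : G.IsTree) {u v w : V} (hu : G.Adj v u) (hw : G.Adj v w)
    (huw : u ≠ w) : {x | G.dist x u < G.dist x v} ⊂ {x | G.dist x v < G.dist x w} := by
  refine ⟨fun x hxu => ?_, fun hsub => ?_⟩
  · rcases hG.dist_eq_dist_add_one_of_adj x hw with hxw | hxw
    · exact absurd (hG.eq_of_adj_of_dist_lt hu hw hxu (by omega)) huw
    · simp only [Set.mem_ofPred_eq]
      omega
  · have hv : v ∈ {x | G.dist x v < G.dist x w} := by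
      simp [dist_eq_one_iff_adj.mpr hw]
    simpa using hsub hv

end SimpleGraph

open SimpleGraph

section

variable {V : Type*} {G : SimpleGraph V} (σ : ∀ v : V, Perm (G.neighborSet v))

def pseudoaccessPerm : Perm G.Dart where
  toFun := pseudoaccessSucc G σ
  invFun d := G.dartOfNeighborSet d.snd ((σ d.snd).symm ⟨d.fst, d.adj.symm⟩)
  left_inv d := Dart.ext _ _ (Prod.ext rfl (congrArg Subtype.val ((σ d.fst).symm_apply_apply _)))
  right_inv d := Dart.ext _ _ (Prod.ext (congrArg Subtype.val ((σ d.snd).apply_symm_apply _)) rfl)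

lemma pseudoaccessPerm_dartOfNeighborSet (v : V) (x : G.neighborSet v) :
    pseudoaccessPerm σ (G.dartOfNeighborSet v x) = (G.dartOfNeighborSet v (σ v x)).symm :=
  rfl

variable {σ}

lemma sameCycle_pseudoaccessPerm_iterate {v : V} (x : G.neighborSet v)
    (h : ∀ y ≠ x, (pseudoaccessPerm σ).SameCycle (G.dartOfNeighborSet v y)
      (G.dartOfNeighborSet v y).symm) (n : ℕ) :
    (pseudoaccessPerm σ).SameCycle (G.dartOfNeighborSet v x)
      (G.dartOfNeighborSet v ((σ v)^[n] x)) := by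
  refine Function.Iterate.rec (fun y => (pseudoaccessPerm σ).SameCycle (G.dartOfNeighborSet v x)
    (G.dartOfNeighborSet v y)) (Perm.SameCycle.refl _ _) (fun y hy => ?_) n
  by_cases hyx : σ v y = x
  · simp only [hyx, Perm.SameCycle.refl]
  · have := hy.apply_right
    rw [pseudoaccessPerm_dartOfNeighborSet] at this
    exact this.trans (h _ hyx).symm

lemma sameCycle_pseudoaccessPerm_symm_of_forall_ne {v : V} [Finite (G.neighborSet v)]
    (x : G.neighborSet v) (h : ∀ y ≠ x, (pseudoaccessPerm σ).SameCycle (G.dartOfNeighborSet v y)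
      (G.dartOfNeighborSet v y).symm) :
    (pseudoaccessPerm σ).SameCycle (G.dartOfNeighborSet v x) (G.dartOfNeighborSet v x).symm := by
  obtain ⟨n, hn⟩ := (Perm.SameCycle.refl (σ v) x).symm_apply_right.exists_nat_pow_eq
  have := (sameCycle_pseudoaccessPerm_iterate x h n).apply_right
  rwa [Perm.iterate_eq_pow, hn, pseudoaccessPerm_dartOfNeighborSet, Equiv.apply_symm_apply] at this

variable (σ) in
lemma SimpleGraph.IsTree.sameCycle_pseudoaccessPerm_symm [Finite V] (hG : G.IsTree)
    (d : G.Dart) : (pseudoaccessPerm σ).SameCycle d d.symm := by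
  induction d using
    (measure fun d : G.Dart => {x | G.dist x d.fst < G.dist x d.snd}.ncard).wf.induction with
  | h d ih =>
  obtain ⟨⟨v, w⟩, hvw⟩ := d
  refine sameCycle_pseudoaccessPerm_symm_of_forall_ne (v := v) ⟨w, hvw⟩ fun y hy => ?_
  have hlt := Set.ncard_lt_ncard (hG.setOf_dist_lt_ssubset y.2 hvw (fun h => hy (Subtype.ext h)))
  simpa only [Dart.symm_symm] using (ih (G.dartOfNeighborSet v y).symm hlt).symm

lemma sameCycle_pseudoaccessPerm_of_walk (hsymm : ∀ d, (pseudoaccessPerm σ).SameCycle d d.symm)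
    (hσ : ∀ v : V, ∀ x y : G.neighborSet v, ∃ n : ℕ, (⇑(σ v))^[n] x = y) {a b : V}
    (p : G.Walk a b) (x : G.neighborSet a) (y : G.neighborSet b) :
    (pseudoaccessPerm σ).SameCycle (G.dartOfNeighborSet a x) (G.dartOfNeighborSet b y) := by
  have at_vertex : ∀ v (x y : G.neighborSet v),
      (pseudoaccessPerm σ).SameCycle (G.dartOfNeighborSet v x) (G.dartOfNeighborSet v y) := by
    intro v x y
    obtain ⟨n, rfl⟩ := hσ v x y
    exact sameCycle_pseudoaccessPerm_iterate x (fun y _ => hsymm _) n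
  induction p with
  | nil => exact at_vertex _ x y
  | cons hab q ih =>
    exact ((at_vertex _ x ⟨_, hab⟩).trans (hsymm _)).trans (ih ⟨_, hab.symm⟩ y)

end

/-- In a finite tree, if the cyclic order of edges at each vertex is a single cycle,
then the successor function on pseudoaccesses is a single cycle: it acts transitively
on the set of all pseudoaccesses. -/
theorem pseudoaccess_successor_transitive
    {V : Type*} [Fintype V] (G : SimpleGraph V) (hT : G.IsTree)
    (σ : ∀ v : V, Equiv.Perm (G.neighborSet v))
    (hσ : ∀ v : V, ∀ x y : G.neighborSet v, ∃ n : ℕ, (⇑(σ v))^[n] x = y) :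
    ∀ d d' : G.Dart, ∃ n : ℕ, (pseudoaccessSucc G σ)^[n] d = d' := by
  have : Finite G.Dart := Finite.of_injective _ Dart.toProd_injective
  intro d d'
  have hcycle : (pseudoaccessPerm σ).SameCycle d d' :=
    sameCycle_pseudoaccessPerm_of_walk (hT.sameCycle_pseudoaccessPerm_symm σ) hσ
      (hT.connected d.fst d'.fst).some ⟨_, d.adj⟩ ⟨_, d'.adj⟩
  obtain ⟨n, hn⟩ := hcycle.exists_nat_pow_eq
  exact ⟨n, by rwa [← Perm.iterate_eq_pow] at hn⟩
end

section
/- Let f₁: V₁ → V₂ with local degree δ₁: V₁ → ℤ≥1 be a homogeneous covering of degree n₁ (i.e., for every v' ∈ V₂, Σ_{v: f₁(v)=v'} δ₁(v) = n₁ where n₁ = 1 + Σ_{v∈V₁}(δ₁(v)−1)), and let f₂: V₂ → V₃ with local degree δ₂: V₂ → ℤ≥1 have degree n₂ = 1 + Σ_{v'∈V₂}(δ₂(v')−1). Define g = f₂ ∘ f₁ and δ(v) = δ₁(v)·δ₂(f₁(v)). Then the degree of (g, δ) satisfies 1 + Σ_{v ∈ V₁}(δ(v) − 1) = n₁·n₂.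 -/
open Finset

/-- Multiplicativity of the degree under composition of abstract coverings: if
`(f₁, δ₁)` is homogeneous of degree `n₁` and `(f₂, δ₂)` has degree `n₂`, then the
composite covering `(f₂ ∘ f₁, v ↦ δ₁ v * δ₂ (f₁ v))` has degree `n₁ * n₂`. -/
theorem degree_comp_coverings
    {V₁ V₂ V₃ : Type*} [Fintype V₁] [Fintype V₂] [Fintype V₃] [DecidableEq V₂]
    (f₁ : V₁ → V₂) (δ₁ : V₁ → ℤ) (hδ₁ : ∀ v, 1 ≤ δ₁ v)
    (f₂ : V₂ → V₃) (δ₂ : V₂ → ℤ) (hδ₂ : ∀ v', 1 ≤ δ₂ v')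
    (n₁ n₂ : ℤ)
    (hn₁ : n₁ = 1 + ∑ v : V₁, (δ₁ v - 1))
    (hn₂ : n₂ = 1 + ∑ v' : V₂, (δ₂ v' - 1))
    (hhom : ∀ v' : V₂, ∑ v ∈ univ.filter (fun v => f₁ v = v'), δ₁ v = n₁) :
    1 + ∑ v : V₁, (δ₁ v * δ₂ (f₁ v) - 1) = n₁ * n₂ := by
  have key : ∑ v : V₁, δ₁ v * δ₂ (f₁ v) = ∑ v' : V₂, n₁ * δ₂ v' := by
    rw [← Finset.sum_fiberwise univ f₁ (fun v => δ₁ v * δ₂ (f₁ v))]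
    refine Finset.sum_congr rfl fun v' _ => ?_
    rw [← hhom v', Finset.sum_mul]
    refine Finset.sum_congr rfl fun v hv => ?_
    rw [(Finset.mem_filter.mp hv).2]
  have h1 : ∑ v : V₁, δ₁ v = ∑ v' : V₂, n₁ := by
    rw [← Finset.sum_fiberwise univ f₁ δ₁]
    exact Finset.sum_congr rfl fun v' _ => hhom v'
  simp only [Finset.sum_sub_distrib, Finset.sum_const, Finset.card_univ, nsmul_eq_mul,
    mul_one] at *
  rw [key, hn₂, ← Finset.mul_sum]
  have := hn₁
  rw [h1] at this
  ring_nf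
  ring_nf at this
  linarith
end
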